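/- For m, k ∈ ℕ, the moment of the Legendre polynomial c_k^m := ∫_{−1}^{1} x^{m+2k} P_m(x) dx equals m! (m+1)_{2k} / (2^{m−1} (3/2)_m 4^k k! (m+3/2)_k). -/

import Mathlib

/-!
By the Rodrigues formula, `m` integrations by parts move the derivatives from `(x² - 1)ᵐ` onto
`x^(m + 2k)`; the boundary terms vanish because `±1` are roots of order `m` of `(x² - 1)ᵐ`. What
remains is `(m + 2k)! / (2k)!` times the beta integral `∫₋₁¹ x^(2k) (1 - x²)ᵐ dx = m! / (k + 1/2)_{m+1}`,
which one more integration by parts reduces to `m = 0`. The stated form then follows from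
`(2k)! = 4ᵏ k! (1/2)_k` and from splitting `(1/2)_{m+k+1}` in two ways.
-/

/-- The Pochhammer symbol (rising factorial) `(a)_n = a(a+1)⋯(a+n-1)` in `ℝ`. -/
noncomputable def poch (a : ℝ) (n : ℕ) : ℝ := ∏ j ∈ Finset.range n, (a + j)

/-- The `m`-th Legendre polynomial `P_m` (Gegenbauer with parameter 1/2, `P_m(1) = 1`),
via the Rodrigues formula `P_m(x) = (1/(2^m m!)) dᵐ/dxᵐ (x² - 1)^m`. -/
noncomputable def legendreP (m : ℕ) (x : ℝ) : ℝ :=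
  (1 / (2 ^ m * (m.factorial : ℝ))) * iteratedDeriv m (fun t : ℝ => (t ^ 2 - 1) ^ m) x

open Polynomial Nat

section Pochhammer

lemma poch_eq_eval_ascPochhammer (a : ℝ) (n : ℕ) : poch a n = (ascPochhammer ℝ n).eval a := by
  induction n with
  | zero => simp [poch]
  | succ n ih => rw [poch, Finset.prod_range_succ, ← poch, ih, ascPochhammer_succ_eval]

lemma poch_pos {a : ℝ} (ha : 0 < a) (n : ℕ) : 0 < poch a n := by
  rw [poch_eq_eval_ascPochhammer]
  exact ascPochhammer_pos n a ha

lemma factorial_mul_poch (r n : ℕ) : (r ! : ℝ) * poch (r + 1) n = (r + n)! := by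
  rw [poch_eq_eval_ascPochhammer]
  exact_mod_cast factorial_mul_ascPochhammer ℝ r n

lemma poch_add (a : ℝ) (p q : ℕ) : poch a (p + q) = poch a p * poch (a + p) q := by
  simp only [poch, Finset.prod_range_add, Nat.cast_add, add_assoc]

lemma poch_succ_right (a : ℝ) (n : ℕ) : poch a (n + 1) = poch a n * (a + n) :=
  Finset.prod_range_succ _ _

lemma poch_succ_left (a : ℝ) (n : ℕ) : poch a (n + 1) = a * poch (a + 1) n := by
  rw [add_comm n, poch_add]
  simp [poch]

lemma factorial_two_mul_eq_four_pow_mul_poch (k : ℕ) :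
    ((2 * k)! : ℝ) = 4 ^ k * k ! * poch (1 / 2) k := by
  induction k with
  | zero => simp [poch]
  | succ k ih =>
    rw [Nat.mul_succ, Nat.factorial_succ, Nat.factorial_succ, poch_succ_right, Nat.factorial_succ]
    push_cast
    rw [ih]
    ring

lemma poch_half_mul_poch (m k : ℕ) :
    poch (1 / 2) k * poch (k + 1 / 2) (m + 1) = poch (3 / 2) m * poch (m + 3 / 2) k / 2 := by
  have split_low : poch (1 / 2) (k + (m + 1)) = poch (1 / 2) k * poch (k + 1 / 2) (m + 1) := by
    rw [poch_add, add_comm (1 / 2 : ℝ)]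
  have split_high : poch (1 / 2) (m + k + 1) = poch (3 / 2) m * poch (m + 3 / 2) k / 2 := by
    rw [poch_succ_left, poch_add]
    norm_num [add_comm (m : ℝ)]
    ring
  rw [← split_low, ← split_high, add_comm k, add_right_comm]

end Pochhammer

section PolynomialCalculus

lemma iteratedDeriv_eval (p : ℝ[X]) (n : ℕ) :
    iteratedDeriv n (fun x => p.eval x) = fun x => (derivative^[n] p).eval x := by
  induction n with
  | zero => simp
  | succ n ih =>
    rw [iteratedDeriv_succ, ih, Function.iterate_succ_apply']
    exact funext fun x => Polynomial.deriv _

lemma eval_iterate_derivative_eq_zero_of_pow_dvd {R : Type*} [CommRing R] {p : R[X]} {t : R}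
    {n i : ℕ} (hp : (X - C t) ^ n ∣ p) (hi : i < n) : (derivative^[i] p).eval t = 0 := by
  obtain ⟨q, hq⟩ := pow_sub_dvd_iterate_derivative_of_pow_dvd i hp
  rw [hq, eval_mul, eval_pow, eval_sub, eval_X, eval_C, sub_self, zero_pow (by omega), zero_mul]

lemma integral_eval_mul_eval_derivative {a b : ℝ} (P : ℝ[X]) {Q : ℝ[X]}
    (ha : Q.eval a = 0) (hb : Q.eval b = 0) :
    ∫ x in a..b, P.eval x * (derivative Q).eval x =
      -∫ x in a..b, (derivative P).eval x * Q.eval x := by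
  rw [intervalIntegral.integral_mul_deriv_eq_deriv_mul (fun x _ => P.hasDerivAt x)
    (fun x _ => Q.hasDerivAt x) ((derivative P).continuous.intervalIntegrable _ _)
    ((derivative Q).continuous.intervalIntegrable _ _), ha, hb]
  ring

lemma integral_eval_mul_eval_iterate_derivative {a b : ℝ} (P : ℝ[X]) {Q : ℝ[X]} (n : ℕ)
    (hQ : ∀ i < n, (derivative^[i] Q).eval a = 0 ∧ (derivative^[i] Q).eval b = 0) :
    ∫ x in a..b, P.eval x * (derivative^[n] Q).eval x =
      (-1) ^ n * ∫ x in a..b, (derivative^[n] P).eval x * Q.eval x := by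
  induction n generalizing Q with
  | zero => simp
  | succ n ih =>
    obtain ⟨ha, hb⟩ : Q.eval a = 0 ∧ Q.eval b = 0 := hQ 0 n.succ_pos
    rw [Function.iterate_succ_apply, ih fun i hi => hQ (i + 1) (by omega),
      integral_eval_mul_eval_derivative _ ha hb, Function.iterate_succ_apply' derivative, pow_succ]
    ring

end PolynomialCalculus

section BetaIntegral

lemma integral_pow_mul_one_sub_sq_pow_succ (m k : ℕ) :
    ∫ x in (-1 : ℝ)..1, x ^ (2 * k) * (1 - x ^ 2) ^ (m + 1) =
      2 * ((m : ℝ) + 1) / (2 * k + 1) *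
        ∫ x in (-1 : ℝ)..1, x ^ (2 * (k + 1)) * (1 - x ^ 2) ^ m := by
  have hk : (2 * k + 1 : ℝ) ≠ 0 := by positivity
  set P : ℝ[X] := C (1 / (2 * k + 1) : ℝ) * X ^ (2 * k + 1)
  set Q : ℝ[X] := (1 - X ^ 2) ^ (m + 1)
  calc ∫ x in (-1 : ℝ)..1, x ^ (2 * k) * (1 - x ^ 2) ^ (m + 1)
      = ∫ x in (-1 : ℝ)..1, (derivative P).eval x * Q.eval x := by
        congr 1 with x
        simp [P, Q, hk]
    _ = -∫ x in (-1 : ℝ)..1, P.eval x * (derivative Q).eval x := by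
        rw [integral_eval_mul_eval_derivative _ (by simp [Q]) (by simp [Q]), neg_neg]
    _ = ∫ x in (-1 : ℝ)..1, 2 * (m + 1) / (2 * k + 1) * (x ^ (2 * (k + 1)) * (1 - x ^ 2) ^ m) := by
        rw [← intervalIntegral.integral_neg]
        congr 1 with x
        simp [P, Q, derivative_pow]
        ring
    _ = _ := intervalIntegral.integral_const_mul _ _

lemma integral_pow_mul_one_sub_sq_pow (m k : ℕ) :
    ∫ x in (-1 : ℝ)..1, x ^ (2 * k) * (1 - x ^ 2) ^ m = m ! / poch (k + 1 / 2) (m + 1) := by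
  induction m generalizing k with
  | zero =>
    have hodd : Odd (2 * k + 1) := odd_two_mul_add_one k
    simp [integral_pow, hodd.neg_one_pow, poch]
    field_simp
    ring
  | succ m ih =>
    have hshift : ((k + 1 : ℕ) : ℝ) + 1 / 2 = k + 1 / 2 + 1 := by push_cast; ring
    rw [integral_pow_mul_one_sub_sq_pow_succ, ih, hshift, poch_succ_left _ (m + 1),
      Nat.factorial_succ]
    push_cast
    field_simp

end BetaIntegral

section Legendre

lemma eval_iterate_derivative_sq_sub_one_pow_eq_zero {R : Type*} [CommRing R] {m i : ℕ}
    (hi : i < m) {t : R} (ht : t ^ 2 = 1) : (derivative^[i] ((X ^ 2 - 1) ^ m : R[X])).eval t = 0 :=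
  eval_iterate_derivative_eq_zero_of_pow_dvd
    (pow_dvd_pow_of_dvd (dvd_iff_isRoot.mpr (by simp [ht])) m) hi

lemma legendreP_eq_eval_iterate_derivative (m : ℕ) (x : ℝ) :
    legendreP m x = (2 ^ m * m ! : ℝ)⁻¹ * (derivative^[m] ((X ^ 2 - 1) ^ m : ℝ[X])).eval x := by
  have hrodrigues : (fun t : ℝ => (t ^ 2 - 1) ^ m) = fun t => ((X ^ 2 - 1) ^ m : ℝ[X]).eval t := by
    simp
  rw [legendreP, hrodrigues, iteratedDeriv_eval, one_div]

lemma integral_pow_mul_legendreP (m k : ℕ) :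
    ∫ x in (-1 : ℝ)..1, x ^ (m + 2 * k) * legendreP m x =
      (m + 2 * k)! / (2 ^ m * (2 * k)! * poch (k + 1 / 2) (m + 1)) := by
  set Q : ℝ[X] := (X ^ 2 - 1) ^ m
  have hQ : ∀ i < m, (derivative^[i] Q).eval (-1) = 0 ∧ (derivative^[i] Q).eval 1 = 0 :=
    fun i hi => ⟨eval_iterate_derivative_sq_sub_one_pow_eq_zero hi (by norm_num),
      eval_iterate_derivative_sq_sub_one_pow_eq_zero hi (by norm_num)⟩
  have hdesc : ((2 * k)! : ℝ) * (m + 2 * k).descFactorial m = (m + 2 * k)! := by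
    have h := Nat.factorial_mul_descFactorial (Nat.le_add_right m (2 * k))
    rw [Nat.add_sub_cancel_left] at h
    exact_mod_cast h
  calc ∫ x in (-1 : ℝ)..1, x ^ (m + 2 * k) * legendreP m x
      = (2 ^ m * m ! : ℝ)⁻¹ * ∫ x in (-1 : ℝ)..1,
          (X ^ (m + 2 * k) : ℝ[X]).eval x * (derivative^[m] Q).eval x := by
        rw [← intervalIntegral.integral_const_mul]
        congr 1 with x
        rw [legendreP_eq_eval_iterate_derivative, eval_X_pow]
        ring
    _ = (2 ^ m * m ! : ℝ)⁻¹ * ((-1) ^ m * ∫ x in (-1 : ℝ)..1,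
          (derivative^[m] (X ^ (m + 2 * k) : ℝ[X])).eval x * Q.eval x) := by
        rw [integral_eval_mul_eval_iterate_derivative _ _ hQ]
    _ = (2 ^ m * m ! : ℝ)⁻¹ * ((m + 2 * k).descFactorial m *
          ∫ x in (-1 : ℝ)..1, x ^ (2 * k) * (1 - x ^ 2) ^ m) := by
        congr 1
        rw [← intervalIntegral.integral_const_mul, ← intervalIntegral.integral_const_mul]
        congr 1 with x
        simp only [Q, iterate_derivative_X_pow_eq_smul, Nat.add_sub_cancel_left, eval_smul,
          eval_pow, eval_X, eval_sub, eval_one, smul_eq_mul]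
        have hsign : (-1 : ℝ) ^ m * (x ^ 2 - 1) ^ m = (1 - x ^ 2) ^ m := by
          rw [← mul_pow]
          ring
        linear_combination ((m + 2 * k).descFactorial m * x ^ (2 * k) : ℝ) * hsign
    _ = _ := by
        rw [integral_pow_mul_one_sub_sq_pow, ← hdesc]
        field_simp

end Legendre

/-- The moment `c_k^m = ∫_{-1}^1 x^{m+2k} P_m(x) dx` of the Legendre polynomial equals
`m! (m+1)_{2k} / (2^{m-1} (3/2)_m 4^k k! (m+3/2)_k)`. -/
theorem legendre_moment (m k : ℕ) :
    (∫ x in (-1 : ℝ)..1, x ^ (m + 2 * k) * legendreP m x) =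
      (m.factorial : ℝ) * poch ((m : ℝ) + 1) (2 * k) /
        ((2 : ℝ) ^ ((m : ℤ) - 1) * poch (3 / 2) m * 4 ^ k * (k.factorial : ℝ) *
          poch ((m : ℝ) + 3 / 2) k) := by
  rw [integral_pow_mul_legendreP, ← factorial_mul_poch, factorial_two_mul_eq_four_pow_mul_poch,
    zpow_sub_one₀ two_ne_zero, zpow_natCast, mul_assoc (2 ^ m : ℝ), mul_assoc ((4 : ℝ) ^ k * k !),
    poch_half_mul_poch]
  congr 1
  ring
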